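/- Let $m_1, m_2, m_3 > 0$ and define $\alpha_1, \alpha_2, \alpha_3 \in (0, \pi/2)$ by $\cos\alpha_1 = \sqrt{\frac{m_2 m_3}{(m_2+m_1)(m_3+m_1)}}$, $\cos\alpha_2 = \sqrt{\frac{m_1 m_3}{(m_1+m_2)(m_3+m_2)}}$, $\cos\alpha_3 = \sqrt{\frac{m_2 m_1}{(m_3+m_2)(m_3+m_1)}}$. Then $\alpha_1 + \alpha_2 + \alpha_3 = \pi$. -/

import Mathlib

theorem stmt13 (m1 m2 m3 α1 α2 α3 : ℝ)
    (hm1 : 0 < m1) (hm2 : 0 < m2) (hm3 : 0 < m3)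
    (h1 : α1 ∈ Set.Ioo 0 (Real.pi / 2)) (h2 : α2 ∈ Set.Ioo 0 (Real.pi / 2))
    (h3 : α3 ∈ Set.Ioo 0 (Real.pi / 2))
    (hc1 : Real.cos α1 = Real.sqrt (m2 * m3 / ((m2 + m1) * (m3 + m1))))
    (hc2 : Real.cos α2 = Real.sqrt (m1 * m3 / ((m1 + m2) * (m3 + m2))))
    (hc3 : Real.cos α3 = Real.sqrt (m2 * m1 / ((m3 + m2) * (m3 + m1)))) :
    α1 + α2 + α3 = Real.pi := by
  obtain ⟨h1a, h1b⟩ := h1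
  obtain ⟨h2a, h2b⟩ := h2
  obtain ⟨h3a, h3b⟩ := h3
  have hpi := Real.pi_pos
  have h12 : 0 < m2 + m1 := by linarith
  have h13 : 0 < m3 + m1 := by linarith
  have h12' : 0 < m1 + m2 := by linarith
  have h23 : 0 < m3 + m2 := by linarith
  -- arguments of the sqrt's are nonneg
  have hA : (0:ℝ) ≤ m2 * m3 / ((m2 + m1) * (m3 + m1)) := by positivity
  have hB : (0:ℝ) ≤ m1 * m3 / ((m1 + m2) * (m3 + m2)) := by positivity
  -- sines
  have hs1 : Real.sin α1 = Real.sqrt (m1 * (m1 + m2 + m3) / ((m2 + m1) * (m3 + m1))) := by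
    rw [Real.sin_eq_sqrt_one_sub_cos_sq (le_of_lt h1a) (by linarith), hc1,
      Real.sq_sqrt hA]
    congr 1
    field_simp
    ring
  have hs2 : Real.sin α2 = Real.sqrt (m2 * (m1 + m2 + m3) / ((m1 + m2) * (m3 + m2))) := by
    rw [Real.sin_eq_sqrt_one_sub_cos_sq (le_of_lt h2a) (by linarith), hc2,
      Real.sq_sqrt hB]
    congr 1
    field_simp
    ring
  have hE : (0:ℝ) ≤ m1 * m2 / ((m1 + m3) * (m2 + m3)) := by positivity
  have hc3' : Real.cos α3 = Real.sqrt (m1 * m2 / ((m1 + m3) * (m2 + m3))) := by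
    rw [hc3]; ring_nf
  have key : Real.cos (α1 + α2) = Real.cos (Real.pi - α3) := by
    rw [Real.cos_pi_sub, Real.cos_add, hc1, hc2, hs1, hs2, hc3',
      ← Real.sqrt_mul hA, ← Real.sqrt_mul (by positivity)]
    have e1 : m2 * m3 / ((m2 + m1) * (m3 + m1)) * (m1 * m3 / ((m1 + m2) * (m3 + m2)))
        = (m3 / (m1 + m2)) ^ 2 * (m1 * m2 / ((m1 + m3) * (m2 + m3))) := by
      field_simp
      ring
    have e2 : m1 * (m1 + m2 + m3) / ((m2 + m1) * (m3 + m1)) *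
        (m2 * (m1 + m2 + m3) / ((m1 + m2) * (m3 + m2)))
        = ((m1 + m2 + m3) / (m1 + m2)) ^ 2 * (m1 * m2 / ((m1 + m3) * (m2 + m3))) := by
      field_simp
      ring
    rw [e1, e2, Real.sqrt_mul (sq_nonneg _), Real.sqrt_mul (sq_nonneg _),
      Real.sqrt_sq (by positivity), Real.sqrt_sq (by positivity)]
    have : m3 / (m1 + m2) - (m1 + m2 + m3) / (m1 + m2) = -1 := by
      field_simp
      ring
    nlinarith [Real.sqrt_nonneg (m1 * m2 / ((m1 + m3) * (m2 + m3)))]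
  have heq : α1 + α2 = Real.pi - α3 :=
    Real.injOn_cos ⟨by linarith, by linarith⟩ ⟨by linarith, by linarith⟩ key
  linarith
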